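/- arXiv:0901.2551 — 4 statements merged into one kernel-verified Lean document; each statement's English description precedes it below -/
import Mathlib

section
/- If a formula φ is provable from a set of sentences Γ in classical first-order logic, then φ^N is provable from Γ^N = {γ^N : γ ∈ Γ} in minimal logic. -/
/-- First-order formulas (de Bruijn indices for variables; atoms are
predicate symbols applied to lists of variables). `¬φ` abbreviates `φ → ⊥`. -/
inductive Fm : Type where
  | atom : ℕ → List ℕ → Fm
  | falsum : Fm
  | and : Fm → Fm → Fm
  | or : Fm → Fm → Fm
  | imp : Fm → Fm → Fm
  | all : Fm → Fm
  | ex : Fm → Fm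
  deriving DecidableEq

namespace Fm

/-- negation: ¬φ := φ → ⊥ -/
def neg (p : Fm) : Fm := imp p falsum

/-- biconditional, as a conjunction of two implications -/
def iff (p q : Fm) : Fm := and (imp p q) (imp q p)

/-- rename free de Bruijn variables -/
def rename (f : ℕ → ℕ) : Fm → Fm
  | atom i a => atom i (a.map f)
  | falsum => falsum
  | and p q => and (rename f p) (rename f q)
  | or p q => or (rename f p) (rename f q)
  | imp p q => imp (rename f p) (rename f q)
  | all p => all (rename (fun n => match n with | 0 => 0 | m+1 => f m + 1) p)
  | ex p => ex (rename (fun n => match n with | 0 => 0 | m+1 => f m + 1) p)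

/-- shift all free variables up by one -/
def lift (p : Fm) : Fm := rename Nat.succ p

/-- substitute the variable `k` for de Bruijn index 0 -/
def inst (k : ℕ) (p : Fm) : Fm := rename (fun n => match n with | 0 => k | m+1 => m) p

end Fm

inductive Logic : Type where
  | minimal | intuitionistic | classical
  deriving DecidableEq

/-- Natural deduction for minimal / intuitionistic / classical first-order logic:
minimal logic has no ex falso rule; intuitionistic logic adds ex falso;
classical logic further adds excluded middle. -/
inductive Pf : Logic → Set Fm → Fm → Prop where
  | ax {L Γ p} : p ∈ Γ → Pf L Γ p
  | andI {L Γ p q} : Pf L Γ p → Pf L Γ q → Pf L Γ (.and p q)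
  | andE1 {L Γ p q} : Pf L Γ (.and p q) → Pf L Γ p
  | andE2 {L Γ p q} : Pf L Γ (.and p q) → Pf L Γ q
  | orI1 {L Γ p q} : Pf L Γ p → Pf L Γ (.or p q)
  | orI2 {L Γ p q} : Pf L Γ q → Pf L Γ (.or p q)
  | orE {L Γ p q r} : Pf L Γ (.or p q) → Pf L (insert p Γ) r → Pf L (insert q Γ) r →
      Pf L Γ r
  | impI {L Γ p q} : Pf L (insert p Γ) q → Pf L Γ (.imp p q)
  | impE {L Γ p q} : Pf L Γ (.imp p q) → Pf L Γ p → Pf L Γ q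
  | allI {L Γ p} : Pf L (Fm.lift '' Γ) p → Pf L Γ (.all p)
  | allE {L Γ p} (k : ℕ) : Pf L Γ (.all p) → Pf L Γ (p.inst k)
  | exI {L Γ p} (k : ℕ) : Pf L Γ (p.inst k) → Pf L Γ (.ex p)
  | exE {L Γ p r} : Pf L Γ (.ex p) → Pf L (insert p (Fm.lift '' Γ)) r.lift → Pf L Γ r
  | exfalso {L Γ p} : L ≠ .minimal → Pf L Γ .falsum → Pf L Γ p
  | em {Γ p} : Pf .classical Γ (.or p (.neg p))

/-- The Gödel–Gentzen negative translation. -/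
def N : Fm → Fm
  | .atom i a => .neg (.neg (.atom i a))
  | .falsum => .falsum
  | .and p q => .and (N p) (N q)
  | .or p q => .neg (.and (.neg (N p)) (.neg (N q)))
  | .imp p q => .imp (N p) (N q)
  | .all p => .all (N p)
  | .ex p => .neg (.all (.neg (N p)))

/-!
Induction on the derivation, in any of the three logics. Every translated formula is
`¬¬`-stable in minimal logic: `⊥` and negations are, and `∧`, `→`, `∀` preserve stability.
Stability replaces ex falso, and it lets the translated `∨`- and `∃`-eliminations (whose
major premises are negations) conclude `N r` by refuting `¬ N r`. Excluded middle becomes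
`¬(¬Aᴺ ∧ ¬¬Aᴺ)`, which is minimally provable, and the quantifier rules go through because `N`
commutes with renaming of variables.
-/

namespace Fm

theorem rename_rename_of_leftInverse {f g : ℕ → ℕ} (hgf : Function.LeftInverse g f) (p : Fm) :
    (p.rename f).rename g = p := by
  induction p generalizing f g with
  | atom i a => simp [rename, List.map_map, hgf.comp_eq_id]
  | falsum => rfl
  | and p q ihp ihq | or p q ihp ihq | imp p q ihp ihq => simp [rename, ihp hgf, ihq hgf]
  | all p ih | ex p ih =>
    simp only [rename]
    congr 1
    exact ih fun n => by cases n <;> simp [hgf _]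

end Fm

open Fm

theorem N_rename (f : ℕ → ℕ) (p : Fm) : N (p.rename f) = (N p).rename f := by
  induction p generalizing f with
  | atom | falsum => rfl
  | and p q ihp ihq | or p q ihp ihq | imp p q ihp ihq => simp [N, rename, neg, ihp, ihq]
  | all p ih | ex p ih => simp [N, rename, neg, ih]

theorem N_image_lift (Γ : Set Fm) : N '' (lift '' Γ) = lift '' (N '' Γ) := by
  simp only [Set.image_image, lift, N_rename]

def Stable (p : Fm) : Prop := ∀ {L : Logic} {Γ : Set Fm}, Pf L Γ p.neg.neg → Pf L Γ p

namespace Pf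

variable {L : Logic} {Γ Δ : Set Fm} {p q r : Fm}

theorem mono (h : Pf L Γ p) (hΓΔ : Γ ⊆ Δ) : Pf L Δ p := by
  induction h generalizing Δ with
  | ax hp => exact ax (hΓΔ hp)
  | andI _ _ ih₁ ih₂ => exact andI (ih₁ hΓΔ) (ih₂ hΓΔ)
  | andE1 _ ih => exact andE1 (ih hΓΔ)
  | andE2 _ ih => exact andE2 (ih hΓΔ)
  | orI1 _ ih => exact orI1 (ih hΓΔ)
  | orI2 _ ih => exact orI2 (ih hΓΔ)
  | orE _ _ _ ih ih₁ ih₂ =>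
    exact orE (ih hΓΔ) (ih₁ (Set.insert_subset_insert hΓΔ))
      (ih₂ (Set.insert_subset_insert hΓΔ))
  | impI _ ih => exact impI (ih (Set.insert_subset_insert hΓΔ))
  | impE _ _ ih₁ ih₂ => exact impE (ih₁ hΓΔ) (ih₂ hΓΔ)
  | allI _ ih => exact allI (ih (Set.image_mono hΓΔ))
  | allE k _ ih => exact allE k (ih hΓΔ)
  | exI k _ ih => exact exI k (ih hΓΔ)
  | exE _ _ ih₁ ih₂ =>
    exact exE (ih₁ hΓΔ) (ih₂ (Set.insert_subset_insert (Set.image_mono hΓΔ)))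
  | exfalso hL _ ih => exact exfalso hL (ih hΓΔ)
  | em => exact em

theorem hyp : Pf L (insert p Γ) p := ax (Set.mem_insert p Γ)

theorem weaken (h : Pf L Γ p) : Pf L (insert q Γ) p := h.mono (Set.subset_insert q Γ)

theorem of_lift_all (h : Pf L Γ (all q).lift) : Pf L Γ q := by
  have := allE 0 h
  rwa [inst, rename_rename_of_leftInverse fun n => by cases n <;> rfl] at this

theorem contrapose (h : Pf L (insert p Γ) q) : Pf L (insert q.neg Γ) p.neg :=
  impI (impE hyp.weaken (h.mono (Set.insert_subset_insert (Set.subset_insert _ _))))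

theorem negNeg_map (h : Pf L (insert p Γ) q) (hp : Pf L Γ p.neg.neg) : Pf L Γ q.neg.neg :=
  impI (impE hp.weaken (contrapose h))

theorem negAllNeg_of_inst (k : ℕ) (h : Pf L Γ (p.inst k)) : Pf L Γ (all p.neg).neg :=
  impI (impE (allE k hyp) h.weaken)

theorem stable_orE (hr : Stable r) (h : Pf L Γ (and p.neg q.neg).neg)
    (hp : Pf L (insert p Γ) r) (hq : Pf L (insert q Γ) r) : Pf L Γ r :=
  hr (impI (impE h.weaken (andI (contrapose hp) (contrapose hq))))

theorem stable_exE (hr : Stable r) (h : Pf L Γ (all p.neg).neg)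
    (hp : Pf L (insert p (lift '' Γ)) r.lift) : Pf L Γ r := by
  refine hr (impI (impE h.weaken (allI ?_)))
  rw [Set.image_insert_eq]
  exact contrapose hp

end Pf

open Pf

theorem stable_neg (p : Fm) : Stable p.neg := fun h =>
  impI (impE h.weaken (impI (impE hyp hyp.weaken)))

theorem stable_N (φ : Fm) : Stable (N φ) := by
  induction φ with
  | atom | or | ex => exact stable_neg _
  | falsum => exact fun h => impE h (impI hyp)
  | and p q ihp ihq =>
    exact fun h => andI (ihp (negNeg_map (andE1 hyp) h)) (ihq (negNeg_map (andE2 hyp) h))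
  | imp p q _ ihq =>
    exact fun h => impI (ihq (negNeg_map (impE hyp hyp.weaken) h.weaken))
  | all p ih =>
    refine fun h => impE (impI (allI ?_)) h
    rw [Set.image_insert_eq]
    exact ih (negNeg_map hyp.of_lift_all hyp)

theorem Pf.N_of_falsum {L : Logic} {Γ : Set Fm} (φ : Fm) (h : Pf L Γ .falsum) : Pf L Γ (N φ) :=
  stable_N φ (impI h.weaken)

theorem Pf.N_minimal {L : Logic} {Γ : Set Fm} {φ : Fm} (h : Pf L Γ φ) :
    Pf .minimal (N '' Γ) (N φ) := by
  induction h with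
  | ax hp => exact ax (Set.mem_image_of_mem N hp)
  | andI _ _ ih₁ ih₂ => exact andI ih₁ ih₂
  | andE1 _ ih => exact andE1 ih
  | andE2 _ ih => exact andE2 ih
  | orI1 _ ih => exact impI (impE (andE1 hyp) ih.weaken)
  | orI2 _ ih => exact impI (impE (andE2 hyp) ih.weaken)
  | @orE _ _ _ _ r _ _ _ ih ih₁ ih₂ =>
    rw [Set.image_insert_eq] at ih₁ ih₂
    exact stable_orE (stable_N r) ih ih₁ ih₂
  | impI _ ih =>
    rw [Set.image_insert_eq] at ih
    exact impI ih
  | impE _ _ ih₁ ih₂ => exact impE ih₁ ih₂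
  | allI _ ih =>
    rw [N_image_lift] at ih
    exact allI ih
  | allE k _ ih =>
    have := allE k ih
    rwa [inst, ← N_rename] at this
  | exI k _ ih =>
    rw [inst, N_rename, ← inst] at ih
    exact negAllNeg_of_inst k ih
  | @exE _ _ _ r _ _ ih₁ ih₂ =>
    rw [Set.image_insert_eq, N_image_lift, lift, N_rename] at ih₂
    exact stable_exE (stable_N r) ih₁ ih₂
  | exfalso _ _ ih => exact N_of_falsum _ ih
  | em => exact impI (impE (andE2 hyp) (andE1 hyp))

/-- if φ is provable from Γ in classical logic, then φ^N is
provable from Γ^N = {γ^N : γ ∈ Γ} in minimal logic. -/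
theorem godel_gentzen_sound {Γ : Set Fm} {φ : Fm}
    (h : Pf .classical Γ φ) : Pf .minimal (N '' Γ) (N φ) := h.N_minimal
end

section
/- For every formula φ in negation-normal form, minimal logic proves φ^N → φ^awk, where φ^awk := ¬(∼φ) and ∼φ is the syntactic negation-normal-form negation of φ. -/
/-- Negation-normal-form formulas: built from atomic and negated atomic
formulas using ∧, ∨, ∀, ∃. -/
inductive IsNNF : Fm → Prop where
  | atom (i a) : IsNNF (.atom i a)
  | natom (i a) : IsNNF (Fm.neg (.atom i a))
  | and {p q} : IsNNF p → IsNNF q → IsNNF (.and p q)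
  | or {p q} : IsNNF p → IsNNF q → IsNNF (.or p q)
  | all {p} : IsNNF p → IsNNF (.all p)
  | ex {p} : IsNNF p → IsNNF (.ex p)

/-- The syntactic negation `∼φ` of a negation-normal-form formula: exchanges
∧ with ∨, ∀ with ∃, and atomic formulas with their negations. -/
def nnfNeg : Fm → Fm
  | .atom i a => .neg (.atom i a)
  | .imp p _ => p
  | .and p q => .or (nnfNeg p) (nnfNeg q)
  | .or p q => .and (nnfNeg p) (nnfNeg q)
  | .all p => .ex (nnfNeg p)
  | .ex p => .all (nnfNeg p)
  | .falsum => .neg .falsum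

/-- The awkward translation φ^awk := ¬(∼φ). -/
def awk (p : Fm) : Fm := .neg (nnfNeg p)


namespace Fm
theorem rename_comp (f g : ℕ → ℕ) (p : Fm) :
    (p.rename g).rename f = p.rename (f ∘ g) := by
  induction p generalizing f g with
  | atom i a => simp [rename, List.map_map]
  | falsum => rfl
  | and p q ihp ihq => simp [rename, ihp, ihq]
  | or p q ihp ihq => simp [rename, ihp, ihq]
  | imp p q ihp ihq => simp [rename, ihp, ihq]
  | all p ih =>
      simp only [rename, ih]
      congr 1
      apply congrFun
      apply congrArg
      funext n; cases n <;> rfl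
  | ex p ih =>
      simp only [rename, ih]
      congr 1
      apply congrFun
      apply congrArg
      funext n; cases n <;> rfl

theorem rename_id (p : Fm) : p.rename id = p := by
  induction p with
  | atom i a => simp [rename]
  | falsum => rfl
  | and p q ihp ihq => simp [rename, ihp, ihq]
  | or p q ihp ihq => simp [rename, ihp, ihq]
  | imp p q ihp ihq => simp [rename, ihp, ihq]
  | all p ih =>
      simp only [rename]
      have : (fun n => match n with | 0 => 0 | m+1 => id m + 1) = (id : ℕ → ℕ) := by
        funext n; cases n <;> rfl
      rw [this, ih]
  | ex p ih =>
      simp only [rename]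
      have : (fun n => match n with | 0 => 0 | m+1 => id m + 1) = (id : ℕ → ℕ) := by
        funext n; cases n <;> rfl
      rw [this, ih]

theorem inst_lift_under (q : Fm) :
    (q.rename (fun n => match n with | 0 => 0 | m+1 => Nat.succ m + 1)).inst 0 = q := by
  unfold inst
  rw [rename_comp]
  have : ((fun n => match n with | 0 => 0 | m+1 => m) ∘
      (fun n => match n with | 0 => 0 | m+1 => Nat.succ m + 1)) = (id : ℕ → ℕ) := by
    funext n; cases n <;> rfl
  rw [this, rename_id]

theorem lift_all (q : Fm) : Fm.lift (Fm.all q) =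
    Fm.all (q.rename (fun n => match n with | 0 => 0 | m+1 => Nat.succ m + 1)) := rfl

end Fm

theorem Pf.weaken_s8 {L Γ Δ p} (h : Pf L Γ p) (hs : Γ ⊆ Δ) : Pf L Δ p := by
  induction h generalizing Δ with
  | ax hp => exact Pf.ax (hs hp)
  | andI _ _ ih1 ih2 => exact Pf.andI (ih1 hs) (ih2 hs)
  | andE1 _ ih => exact Pf.andE1 (ih hs)
  | andE2 _ ih => exact Pf.andE2 (ih hs)
  | orI1 _ ih => exact Pf.orI1 (ih hs)
  | orI2 _ ih => exact Pf.orI2 (ih hs)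
  | orE _ _ _ ih ih1 ih2 =>
      exact Pf.orE (ih hs) (ih1 (Set.insert_subset_insert hs))
        (ih2 (Set.insert_subset_insert hs))
  | impI _ ih => exact Pf.impI (ih (Set.insert_subset_insert hs))
  | impE _ _ ih1 ih2 => exact Pf.impE (ih1 hs) (ih2 hs)
  | allI _ ih => exact Pf.allI (ih (Set.image_mono hs))
  | allE k _ ih => exact Pf.allE k (ih hs)
  | exI k _ ih => exact Pf.exI k (ih hs)
  | exE _ _ ih ih2 =>
      exact Pf.exE (ih hs) (ih2 (Set.insert_subset_insert (Set.image_mono hs)))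
  | exfalso hne _ ih => exact Pf.exfalso hne (ih hs)
  | em => exact Pf.em

/-- for every formula φ in negation-normal form, minimal logic
proves φ^N → φ^awk. -/
theorem godel_gentzen_implies_awk {φ : Fm} (h : IsNNF φ) :
    Pf .minimal ∅ (.imp (N φ) (awk φ)) := by
  induction h with
  | atom i a =>
      exact Pf.impI (Pf.ax (Set.mem_insert _ _))
  | natom i a =>
      apply Pf.impI
      apply Pf.impI
      apply Pf.impE (p := Fm.neg (Fm.neg (.atom i a)))
      · exact Pf.ax (Set.mem_insert_of_mem _ (Set.mem_insert _ _))
      · apply Pf.impI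
        exact Pf.impE (Pf.ax (Set.mem_insert _ _))
          (Pf.ax (Set.mem_insert_of_mem _ (Set.mem_insert _ _)))
  | and hp hq ihp ihq =>
      rename_i p q
      apply Pf.impI
      apply Pf.impI
      apply Pf.orE (p := nnfNeg p) (q := nnfNeg q) (Pf.ax (Set.mem_insert _ _))
      · apply Pf.impE (p := nnfNeg p)
        · apply Pf.impE (Pf.weaken_s8 ihp (Set.empty_subset _))
          exact Pf.andE1 (q := N q) (Pf.ax (by simp [N, nnfNeg]))
        · exact Pf.ax (Set.mem_insert _ _)
      · apply Pf.impE (p := nnfNeg q)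
        · apply Pf.impE (Pf.weaken_s8 ihq (Set.empty_subset _))
          exact Pf.andE2 (p := N p) (Pf.ax (by simp [N, nnfNeg]))
        · exact Pf.ax (Set.mem_insert _ _)
  | or hp hq ihp ihq =>
      rename_i p q
      apply Pf.impI
      apply Pf.impI
      apply Pf.impE (p := Fm.and (Fm.neg (N _)) (Fm.neg (N _)))
      · exact Pf.ax (Set.mem_insert_of_mem _ (Set.mem_insert _ _))
      · apply Pf.andI
        · apply Pf.impI
          apply Pf.impE (p := nnfNeg p)
          · exact Pf.impE (Pf.weaken_s8 ihp (Set.empty_subset _)) (Pf.ax (Set.mem_insert _ _))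
          · exact Pf.andE1 (q := nnfNeg q) (Pf.ax (by simp [N, nnfNeg]))
        · apply Pf.impI
          apply Pf.impE (p := nnfNeg q)
          · exact Pf.impE (Pf.weaken_s8 ihq (Set.empty_subset _)) (Pf.ax (Set.mem_insert _ _))
          · exact Pf.andE2 (p := nnfNeg p) (Pf.ax (by simp [N, nnfNeg]))
  | all hp ih =>
      rename_i p
      apply Pf.impI
      apply Pf.impI
      apply Pf.exE (p := nnfNeg p) (Pf.ax (Set.mem_insert _ _))
      show Pf _ _ Fm.falsum
      apply Pf.impE (p := nnfNeg p)
      · exact Pf.impE (Pf.weaken_s8 ih (Set.empty_subset _)) (by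
          have hmem : Fm.lift (Fm.all (N p)) ∈
              insert (nnfNeg p) (Fm.lift '' insert (Fm.ex (nnfNeg p))
                (insert (Fm.all (N p)) (∅ : Set Fm))) := by
            apply Set.mem_insert_of_mem
            exact ⟨_, by simp, rfl⟩
          have := Pf.allE (L := .minimal) 0 (by rw [Fm.lift_all] at hmem; exact Pf.ax hmem)
          rwa [Fm.inst_lift_under] at this)
      · exact Pf.ax (Set.mem_insert _ _)
  | ex hp ih =>
      rename_i p
      apply Pf.impI
      apply Pf.impI
      apply Pf.impE (p := Fm.all (Fm.neg (N p)))
      · exact Pf.ax (Set.mem_insert_of_mem _ (Set.mem_insert _ _))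
      · apply Pf.allI
        apply Pf.impI
        apply Pf.impE (p := nnfNeg p)
        · exact Pf.impE (Pf.weaken_s8 ih (Set.empty_subset _)) (Pf.ax (Set.mem_insert _ _))
        · have hmem : Fm.lift (Fm.all (nnfNeg p)) ∈
              insert (N p) (Fm.lift '' insert (Fm.all (nnfNeg p))
                (insert (Fm.neg (Fm.all (Fm.neg (N p)))) (∅ : Set Fm))) := by
            apply Set.mem_insert_of_mem
            exact ⟨_, by simp, rfl⟩
          have := Pf.allE (L := .minimal) 0 (by rw [Fm.lift_all] at hmem; exact Pf.ax hmem)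
          rwa [Fm.inst_lift_under] at this
end

section
/- The awkward translation fails modus ponens over intuitionistic logic: with φ = ∀x A(x) and ψ = ⊥ for a unary predicate A, the formula φ^awk ∧ (φ → ψ)^awk → ψ^awk is equivalent over minimal logic to ∀x ¬¬A(x) → ¬¬∀x A(x), which is not provable in intuitionistic first-order logic. -/
/-- The atomic formula A(x), where x is the variable bound by the nearest
quantifier (de Bruijn index 0). -/
def A : Fm := .atom 0 [0]

/-- φ := ∀x A(x) (already in negation-normal form). -/
def phi : Fm := .all A

/-- φ^awk = ¬(∼(∀x A(x))) = ¬∃x ¬A(x). -/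
def phiAwk : Fm := .neg (.ex (.neg A))

/-- (φ → ⊥)^awk: the negation-normal form of φ → ⊥ is ∃x ¬A(x), and
its syntactic negation is ∀x A(x), so (φ → ⊥)^awk = ¬∀x A(x). -/
def impAwk : Fm := .neg (.all A)

/-- ψ^awk for ψ = ⊥: namely ¬(∼⊥) = ¬¬⊥. -/
def psiAwk : Fm := .neg (.neg .falsum)

/-- The double-negation shift instance ∀x ¬¬A(x) → ¬¬∀x A(x). -/
def DNS : Fm := .imp (.all (.neg (.neg A))) (.neg (.neg (.all A)))

/-! ### Kripke semantics for the countermodel -/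

def vcons (d : ℕ) (σ : ℕ → ℕ) : ℕ → ℕ
  | 0 => d
  | k+1 => σ k

/-- Kripke forcing in the standard DNS countermodel: worlds are natural
numbers with ≤, the domain at world `n` is `{0,…,n}`, and every atom
`P(k)` is forced at `n` iff `k < n`. -/
def force : Fm → ℕ → (ℕ → ℕ) → Prop
  | .atom _ l, n, σ => ∀ k ∈ l, σ k < n
  | .falsum, _, _ => False
  | .and p q, n, σ => force p n σ ∧ force q n σ
  | .or p q, n, σ => force p n σ ∨ force q n σ
  | .imp p q, n, σ => ∀ m, n ≤ m → force p m σ → force q m σ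
  | .all p, n, σ => ∀ m, n ≤ m → ∀ d, d ≤ m → force p m (vcons d σ)
  | .ex p, n, σ => ∃ d, d ≤ n ∧ force p n (vcons d σ)

theorem force_mono : ∀ (p : Fm) {n m : ℕ} (σ : ℕ → ℕ), n ≤ m →
    force p n σ → force p m σ
  | .atom i l, n, m, σ, h, hf => fun k hk => lt_of_lt_of_le (hf k hk) h
  | .falsum, n, m, σ, h, hf => hf
  | .and p q, n, m, σ, h, hf =>
      ⟨force_mono p σ h hf.1, force_mono q σ h hf.2⟩
  | .or p q, n, m, σ, h, hf =>
      hf.elim (fun h1 => Or.inl (force_mono p σ h h1))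
        (fun h1 => Or.inr (force_mono q σ h h1))
  | .imp p q, n, m, σ, h, hf => fun l hl => hf l (le_trans h hl)
  | .all p, n, m, σ, h, hf => fun l hl => hf l (le_trans h hl)
  | .ex p, n, m, σ, h, hf => by
      obtain ⟨d, hd, hp⟩ := hf
      exact ⟨d, le_trans hd h, force_mono p _ h hp⟩

theorem force_rename : ∀ (p : Fm) (f : ℕ → ℕ) (n : ℕ) (σ : ℕ → ℕ),
    force (p.rename f) n σ ↔ force p n (σ ∘ f) := by
  intro p
  induction p with
  | atom i l => intro f n σ; simp [Fm.rename, force]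
  | falsum => intro f n σ; simp [Fm.rename, force]
  | and p q ihp ihq => intro f n σ; simp [Fm.rename, force, ihp, ihq]
  | or p q ihp ihq => intro f n σ; simp [Fm.rename, force, ihp, ihq]
  | imp p q ihp ihq => intro f n σ; simp [Fm.rename, force, ihp, ihq]
  | all p ih =>
      intro f n σ
      simp only [Fm.rename, force]
      have key : ∀ d, (vcons d σ) ∘ (fun k => match k with | 0 => 0 | m+1 => f m + 1)
          = vcons d (σ ∘ f) := by
        intro d; funext k; cases k <;> rfl
      constructor
      · intro h m hm d hd
        have := (ih _ m (vcons d σ)).mp (h m hm d hd)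
        rwa [key d] at this
      · intro h m hm d hd
        refine (ih _ m (vcons d σ)).mpr ?_
        rw [key d]; exact h m hm d hd
  | ex p ih =>
      intro f n σ
      simp only [Fm.rename, force]
      have key : ∀ d, (vcons d σ) ∘ (fun k => match k with | 0 => 0 | m+1 => f m + 1)
          = vcons d (σ ∘ f) := by
        intro d; funext k; cases k <;> rfl
      constructor
      · rintro ⟨d, hd, hp⟩
        refine ⟨d, hd, ?_⟩
        have := (ih _ n (vcons d σ)).mp hp
        rwa [key d] at this
      · rintro ⟨d, hd, hp⟩
        refine ⟨d, hd, (ih _ n (vcons d σ)).mpr ?_⟩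
        rw [key d]; exact hp

theorem force_lift (p : Fm) (n : ℕ) (d : ℕ) (σ : ℕ → ℕ) :
    force p.lift n (vcons d σ) ↔ force p n σ := by
  rw [Fm.lift, force_rename]
  have : (vcons d σ) ∘ Nat.succ = σ := by funext k; rfl
  rw [this]

theorem force_inst (p : Fm) (k : ℕ) (n : ℕ) (σ : ℕ → ℕ) :
    force (p.inst k) n σ ↔ force p n (vcons (σ k) σ) := by
  rw [Fm.inst, force_rename]
  have : σ ∘ (fun m => match m with | 0 => k | m+1 => m) = vcons (σ k) σ := by
    funext j; cases j <;> rfl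
  rw [this]

theorem soundness {L Γ p} (h : Pf L Γ p) (hL : L ≠ .classical) :
    ∀ (n : ℕ) (σ : ℕ → ℕ), (∀ i, σ i ≤ n) → (∀ q ∈ Γ, force q n σ) →
      force p n σ := by
  induction h with
  | ax hp => intro n σ _ hΓ; exact hΓ _ hp
  | andI _ _ ih1 ih2 =>
      intro n σ hσ hΓ; exact ⟨ih1 hL n σ hσ hΓ, ih2 hL n σ hσ hΓ⟩
  | andE1 _ ih => intro n σ hσ hΓ; exact (ih hL n σ hσ hΓ).1
  | andE2 _ ih => intro n σ hσ hΓ; exact (ih hL n σ hσ hΓ).2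
  | orI1 _ ih => intro n σ hσ hΓ; exact Or.inl (ih hL n σ hσ hΓ)
  | orI2 _ ih => intro n σ hσ hΓ; exact Or.inr (ih hL n σ hσ hΓ)
  | orE _ _ _ ih ih1 ih2 =>
      intro n σ hσ hΓ
      rcases ih hL n σ hσ hΓ with h1 | h1
      · exact ih1 hL n σ hσ (fun q hq => by
          rcases hq with rfl | hq
          · exact h1
          · exact hΓ q hq)
      · exact ih2 hL n σ hσ (fun q hq => by
          rcases hq with rfl | hq
          · exact h1
          · exact hΓ q hq)
  | impI _ ih =>
      intro n σ hσ hΓ m hm hp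
      exact ih hL m σ (fun i => le_trans (hσ i) hm) (fun q hq => by
        rcases hq with rfl | hq
        · exact hp
        · exact force_mono q σ hm (hΓ q hq))
  | impE _ _ ih1 ih2 =>
      intro n σ hσ hΓ
      exact ih1 hL n σ hσ hΓ n le_rfl (ih2 hL n σ hσ hΓ)
  | allI _ ih =>
      intro n σ hσ hΓ m hm d hd
      refine ih hL m (vcons d σ) ?_ ?_
      · intro i; cases i with
        | zero => exact hd
        | succ j => exact le_trans (hσ j) hm
      · rintro q ⟨r, hr, rfl⟩
        exact (force_lift r m d σ).mpr (force_mono r σ hm (hΓ r hr))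
  | allE k _ ih =>
      intro n σ hσ hΓ
      rw [force_inst]
      exact ih hL n σ hσ hΓ n le_rfl (σ k) (hσ k)
  | exI k _ ih =>
      intro n σ hσ hΓ
      have := ih hL n σ hσ hΓ
      rw [force_inst] at this
      exact ⟨σ k, hσ k, this⟩
  | @exE L Γ p r _ _ ih ih1 =>
      intro n σ hσ hΓ
      obtain ⟨d, hd, hp⟩ := ih hL n σ hσ hΓ
      have := ih1 hL n (vcons d σ) ?_ ?_
      · exact (force_lift r n d σ).mp this
      · intro i; cases i with
        | zero => exact hd
        | succ j => exact hσ j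
      · rintro q (rfl | ⟨s, hs, rfl⟩)
        · exact hp
        · exact (force_lift s n d σ).mpr (hΓ s hs)
  | exfalso _ _ ih =>
      intro n σ hσ hΓ
      exact absurd (ih hL n σ hσ hΓ) id
  | em => exact absurd rfl hL

theorem DNS_unprovable : ¬ Pf .intuitionistic ∅ DNS := by
  intro h
  have hs := soundness h (by simp) 0 (fun _ => 0) (fun _ => le_rfl)
    (fun q hq => absurd hq (Set.notMem_empty q))
  -- unfold force on DNS
  have hall : force (.all (.neg (.neg A))) 0 (fun _ => 0) := by
    intro m _ d _
    intro l hl hna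
    exact hna (max l (d+1)) (le_max_left _ _)
      (fun k hk => by
        simp only [List.mem_singleton] at hk
        subst hk
        calc vcons d (fun _ => 0) 0 = d := rfl
          _ < d + 1 := Nat.lt_succ_self d
          _ ≤ max l (d+1) := le_max_right _ _)
  have := hs 0 le_rfl hall 0 (Nat.zero_le _)
  refine this ?_
  intro j _ hj
  have := hj j le_rfl j le_rfl
  have := this 0 (by simp [A])
  exact absurd this (lt_irrefl j)
/-! ### The minimal-logic equivalence -/

theorem lift_phiAwk : Fm.lift phiAwk = phiAwk := by decide
theorem lift_conj : Fm.lift (.and phiAwk impAwk) = .and phiAwk impAwk := by decide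
theorem lift_allnn : Fm.lift (.all (.neg (.neg A))) = .all (.neg (.neg A)) := by decide
theorem inst_negA (k : ℕ) : (Fm.neg A).inst k = Fm.neg (.atom 0 [k]) := by
  simp [Fm.inst, Fm.neg, Fm.rename, A]
theorem inst_nnA : (Fm.neg (.neg A)).inst 0 = Fm.neg (.neg A) := by decide

theorem mp_to_dns :
    Pf .minimal ∅ (Fm.imp (.and phiAwk impAwk) psiAwk |>.imp DNS) := by
  apply Pf.impI
  show Pf _ _ (Fm.imp _ (Fm.neg (.neg (.all A))))
  apply Pf.impI
  apply Pf.impI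
  set Γ3 : Set Fm := insert (Fm.neg (.all A)) (insert (.all (.neg (.neg A)))
      (insert (Fm.imp (.and phiAwk impAwk) psiAwk) ∅)) with hΓ3
  have h1 : Pf .minimal Γ3 phiAwk := by
    apply Pf.impI
    apply Pf.exE (p := Fm.neg A) (r := Fm.falsum)
        (Pf.ax (Set.mem_insert _ _))
    show Pf _ _ Fm.falsum
    have hall : Pf .minimal (insert (Fm.neg A)
        (Fm.lift '' insert (.ex (.neg A)) Γ3)) (.all (.neg (.neg A))) := by
      apply Pf.ax
      apply Set.mem_insert_of_mem
      exact ⟨_, by simp [hΓ3], lift_allnn⟩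
    have h2 := Pf.allE 0 hall
    rw [inst_nnA] at h2
    exact Pf.impE h2 (Pf.ax (Set.mem_insert _ _))
  have h2 : Pf .minimal Γ3 impAwk := Pf.ax (Set.mem_insert _ _)
  have h3 : Pf .minimal Γ3 psiAwk :=
    Pf.impE (Pf.ax (by simp [hΓ3])) (Pf.andI h1 h2)
  exact Pf.impE h3 (Pf.impI (Pf.ax (Set.mem_insert _ _)))

theorem dns_to_mp :
    Pf .minimal ∅ (DNS.imp (Fm.imp (.and phiAwk impAwk) psiAwk)) := by
  apply Pf.impI
  apply Pf.impI
  show Pf _ _ (Fm.imp (.neg .falsum) .falsum)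
  apply Pf.impI
  set Γ3 : Set Fm := insert (Fm.neg .falsum) (insert (.and phiAwk impAwk)
      (insert DNS ∅)) with hΓ3
  have hc : Pf .minimal Γ3 (.and phiAwk impAwk) := Pf.ax (by simp [hΓ3])
  have hall : Pf .minimal Γ3 (.all (.neg (.neg A))) := by
    apply Pf.allI
    apply Pf.impI
    have hex : Pf .minimal (insert (Fm.neg A) (Fm.lift '' Γ3)) (.ex (.neg A)) := by
      apply Pf.exI 0
      rw [inst_negA]
      exact Pf.ax (Set.mem_insert _ _)
    have hphi : Pf .minimal (insert (Fm.neg A) (Fm.lift '' Γ3)) phiAwk := by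
      apply Pf.andE1 (q := impAwk)
      apply Pf.ax
      apply Set.mem_insert_of_mem
      exact ⟨_, by simp [hΓ3], lift_conj⟩
    exact Pf.impE hphi hex
  have hdns : Pf .minimal Γ3 DNS := Pf.ax (by simp [hΓ3])
  exact Pf.impE (Pf.impE hdns hall) (Pf.andE2 hc)
/-- with φ = ∀x A(x) and ψ = ⊥, the formula
φ^awk ∧ (φ → ψ)^awk → ψ^awk is equivalent over minimal logic to the
double-negation shift ∀x ¬¬A(x) → ¬¬∀x A(x), which is not provable in
intuitionistic first-order logic. -/
theorem awk_fails_modus_ponens :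
    Pf .minimal ∅ (Fm.iff (.imp (.and phiAwk impAwk) psiAwk) DNS) ∧
    ¬ Pf .intuitionistic ∅ DNS :=
  ⟨Pf.andI mp_to_dns dns_to_mp, DNS_unprovable⟩
end

section
/- Intuitionistic logic is interpretable in minimal logic via the ∨⊥-translation: if φ is provable in intuitionistic propositional logic, then φ°, obtained by replacing every atomic formula A with A ∨ ⊥, is provable in minimal logic. -/
/-- Propositional (quantifier-free) formulas over atoms, ⊥, ∧, ∨, →. -/
inductive IsProp : Fm → Prop where
  | atom (i a) : IsProp (.atom i a)
  | falsum : IsProp .falsum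
  | and {p q} : IsProp p → IsProp q → IsProp (.and p q)
  | or {p q} : IsProp p → IsProp q → IsProp (.or p q)
  | imp {p q} : IsProp p → IsProp q → IsProp (.imp p q)

/-- The ∨⊥-translation φ°: replace every atomic formula A by A ∨ ⊥, leaving
the connectives and ⊥ unchanged. -/
def orBot : Fm → Fm
  | .atom i a => .or (.atom i a) .falsum
  | .falsum => .falsum
  | .and p q => .and (orBot p) (orBot q)
  | .or p q => .or (orBot p) (orBot q)
  | .imp p q => .imp (orBot p) (orBot q)
  | .all p => .all (orBot p)
  | .ex p => .ex (orBot p)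


theorem Fm.rename_congr {f g : ℕ → ℕ} (h : ∀ n, f n = g n) :
    ∀ p : Fm, Fm.rename f p = Fm.rename g p := by
  intro p
  induction p generalizing f g with
  | atom i a => simp [Fm.rename, List.map_congr_left fun x _ => h x]
  | falsum => rfl
  | and p q ihp ihq => simp [Fm.rename, ihp h, ihq h]
  | or p q ihp ihq => simp [Fm.rename, ihp h, ihq h]
  | imp p q ihp ihq => simp [Fm.rename, ihp h, ihq h]
  | all p ih =>
      simp only [Fm.rename]
      congr 1
      apply ih
      intro n; cases n <;> simp [h]
  | ex p ih =>
      simp only [Fm.rename]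
      congr 1
      apply ih
      intro n; cases n <;> simp [h]

theorem Fm.rename_id_s15 : ∀ p : Fm, Fm.rename id p = p := by
  intro p
  induction p with
  | atom i a => simp [Fm.rename]
  | falsum => rfl
  | and p q ihp ihq => simp [Fm.rename, ihp, ihq]
  | or p q ihp ihq => simp [Fm.rename, ihp, ihq]
  | imp p q ihp ihq => simp [Fm.rename, ihp, ihq]
  | all p ih =>
      simp only [Fm.rename]
      rw [Fm.rename_congr (g := id) (fun n => by cases n <;> simp), ih]
  | ex p ih =>
      simp only [Fm.rename]
      rw [Fm.rename_congr (g := id) (fun n => by cases n <;> simp), ih]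

theorem Fm.rename_comp_s15 (f g : ℕ → ℕ) : ∀ p : Fm,
    Fm.rename f (Fm.rename g p) = Fm.rename (f ∘ g) p := by
  intro p
  induction p generalizing f g with
  | atom i a => simp [Fm.rename]
  | falsum => rfl
  | and p q ihp ihq => simp [Fm.rename, ihp, ihq]
  | or p q ihp ihq => simp [Fm.rename, ihp, ihq]
  | imp p q ihp ihq => simp [Fm.rename, ihp, ihq]
  | all p ih =>
      simp only [Fm.rename, ih]
      congr 1
      apply Fm.rename_congr
      intro n; cases n <;> simp
  | ex p ih =>
      simp only [Fm.rename, ih]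
      congr 1
      apply Fm.rename_congr
      intro n; cases n <;> simp

theorem orBot_rename (f : ℕ → ℕ) : ∀ p : Fm, orBot (Fm.rename f p) = Fm.rename f (orBot p) := by
  intro p
  induction p generalizing f with
  | atom i a => simp [Fm.rename, orBot]
  | falsum => rfl
  | and p q ihp ihq => simp [Fm.rename, orBot, ihp, ihq]
  | or p q ihp ihq => simp [Fm.rename, orBot, ihp, ihq]
  | imp p q ihp ihq => simp [Fm.rename, orBot, ihp, ihq]
  | all p ih => simp [Fm.rename, orBot, ih]
  | ex p ih => simp [Fm.rename, orBot, ih]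

theorem orBot_lift (p : Fm) : orBot p.lift = (orBot p).lift := orBot_rename _ p

theorem orBot_inst (k : ℕ) (p : Fm) : orBot (p.inst k) = (orBot p).inst k := orBot_rename _ p

/-- Key lemma: in minimal logic, ⊥ proves any renamed translated formula. -/
theorem botElim {Γ : Set Fm} (hb : Fm.falsum ∈ Γ) (p : Fm) (f : ℕ → ℕ) :
    Pf .minimal Γ (Fm.rename f (orBot p)) := by
  induction p generalizing Γ f with
  | atom i a => exact Pf.orI2 (Pf.ax hb)
  | falsum => exact Pf.ax hb
  | and p q ihp ihq => exact Pf.andI (ihp hb f) (ihq hb f)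
  | or p q ihp ihq => exact Pf.orI1 (ihp hb f)
  | imp p q ihp ihq =>
      exact Pf.impI (ihq (Set.mem_insert_of_mem _ hb) f)
  | all p ih =>
      apply Pf.allI
      exact ih (Set.mem_image_of_mem _ hb) _
  | ex p ih =>
      apply Pf.exI 0
      show Pf .minimal Γ (Fm.inst 0 (Fm.rename _ (orBot p)))
      rw [Fm.inst, Fm.rename_comp_s15]
      exact ih hb _

theorem main_lemma {L : Logic} {Γ : Set Fm} {p : Fm} (h : Pf L Γ p)
    (hL : L = .intuitionistic) : Pf .minimal (orBot '' Γ) (orBot p) := by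
  induction h with
  | ax hp => exact Pf.ax (Set.mem_image_of_mem _ hp)
  | andI _ _ ih1 ih2 => exact Pf.andI (ih1 hL) (ih2 hL)
  | andE1 _ ih => exact Pf.andE1 (ih hL)
  | andE2 _ ih => exact Pf.andE2 (ih hL)
  | orI1 _ ih => exact Pf.orI1 (ih hL)
  | orI2 _ ih => exact Pf.orI2 (ih hL)
  | orE _ _ _ ih1 ih2 ih3 =>
      refine Pf.orE (ih1 hL) ?_ ?_
      · have := ih2 hL; rwa [Set.image_insert_eq] at this
      · have := ih3 hL; rwa [Set.image_insert_eq] at this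
  | impI _ ih =>
      apply Pf.impI
      have := ih hL; rwa [Set.image_insert_eq] at this
  | impE _ _ ih1 ih2 => exact Pf.impE (ih1 hL) (ih2 hL)
  | allI _ ih =>
      apply Pf.allI
      have := ih hL
      rwa [← Set.image_comp,
        show orBot ∘ Fm.lift = Fm.lift ∘ orBot from funext fun q => orBot_lift q,
        Set.image_comp] at this
  | allE k _ ih =>
      rw [orBot_inst]
      exact Pf.allE k (ih hL)
  | exI k _ ih =>
      apply Pf.exI k
      rw [← orBot_inst]
      exact ih hL
  | exE _ _ ih1 ih2 =>
      apply Pf.exE (ih1 hL)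
      have := ih2 hL
      rwa [Set.image_insert_eq, ← Set.image_comp,
        show orBot ∘ Fm.lift = Fm.lift ∘ orBot from funext fun q => orBot_lift q,
        Set.image_comp, orBot_lift] at this
  | @exfalso L' Γ' p' _ _ ih =>
      refine Pf.impE (Pf.impI ?_) (ih hL)
      have := botElim (Γ := insert Fm.falsum (orBot '' Γ')) (Set.mem_insert _ _) p' id
      rwa [Fm.rename_id_s15] at this
  | em => simp at hL

/-- if φ is a propositional formula provable in intuitionistic
propositional logic, then φ° is provable in minimal logic. -/
theorem orBot_interpretation {φ : Fm} (hp : IsProp φ)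
    (h : Pf .intuitionistic ∅ φ) : Pf .minimal ∅ (orBot φ) := by
  have := main_lemma h rfl
  rwa [Set.image_empty] at this
end
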